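/- Let k be a field of characteristic p > 2 and let A = k⟨a,b⟩/⟨ba - ab - (1/2)a²⟩. Then for all natural numbers r, ℓ ≥ 1, the identity b^r · a^ℓ = ∑_{k'=0}^{r} binom(r,k') · (1/2^{k'}) · ℓ^{(k')} · a^{ℓ+k'} · b^{r-k'} holds in A, where ℓ^{(k')} denotes the rising factorial ℓ(ℓ+1)⋯(ℓ+k'-1) interpreted in k. -/
import Mathlib

noncomputable section

/-- The rising factorial `x^(k) = x(x+1)⋯(x+k-1)` in a commutative ring. -/
def risingFactorial {R : Type*} [CommRing R] (x : R) (k : ℕ) : R :=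
  ∏ i ∈ Finset.range k, (x + i)

variable (k : Type*) [Field k]

def aF : FreeAlgebra k (Fin 2) := FreeAlgebra.ι k 0

def bF : FreeAlgebra k (Fin 2) := FreeAlgebra.ι k 1

/-- The relation `ba = ab + (1/2)a²`. -/
def relA : FreeAlgebra k (Fin 2) → FreeAlgebra k (Fin 2) → Prop :=
  fun x y => x = bF k * aF k ∧ y = aF k * bF k + ((2 : k)⁻¹) • (aF k) ^ 2

/-- The algebra `A = k⟨a,b⟩/⟨ba - ab - (1/2)a²⟩`. -/
abbrev A := RingQuot (relA k)

def aA : A k := RingQuot.mkAlgHom k (relA k) (aF k)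

def bA : A k := RingQuot.mkAlgHom k (relA k) (bF k)

lemma baA : bA k * aA k = aA k * bA k + ((2 : k)⁻¹) • (aA k) ^ 2 := by
  have h : relA k (bF k * aF k) (aF k * bF k + ((2 : k)⁻¹) • (aF k) ^ 2) := ⟨rfl, rfl⟩
  have h2 := RingQuot.mkAlgHom_rel k h
  simpa [aA, bA, map_mul, map_add, map_pow, map_smul] using h2

lemma b_apow (ℓ : ℕ) :
    bA k * (aA k) ^ ℓ = (aA k) ^ ℓ * bA k + ((ℓ : k) * (2 : k)⁻¹) • (aA k) ^ (ℓ + 1) := by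
  induction ℓ with
  | zero => simp
  | succ n ih =>
    rw [pow_succ, ← mul_assoc, ih, add_mul, mul_assoc, baA, smul_mul_assoc, ← pow_succ,
      mul_add, mul_smul_comm, ← mul_assoc, ← pow_succ, ← pow_add]
    push_cast
    rw [add_mul (n : k) 1, one_mul, add_smul]
    have : n + 2 = n + 1 + 1 := by omega
    rw [this]
    abel

lemma bpow_mul_apow' (r ℓ : ℕ) :
    (bA k) ^ r * (aA k) ^ ℓ =
      ∑ k' ∈ Finset.range (r + 1),
        ((r.choose k' : k) * ((2 : k)⁻¹) ^ k' * risingFactorial (ℓ : k) k') •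
          ((aA k) ^ (ℓ + k') * (bA k) ^ (r - k')) := by
  induction r with
  | zero => simp [risingFactorial]
  | succ r ih =>
    rw [pow_succ', mul_assoc, ih, Finset.mul_sum]
    have step : ∀ k' ∈ Finset.range (r + 1),
        bA k * (((r.choose k' : k) * ((2 : k)⁻¹) ^ k' * risingFactorial (ℓ : k) k') •
          ((aA k) ^ (ℓ + k') * (bA k) ^ (r - k'))) =
        ((r.choose k' : k) * ((2 : k)⁻¹) ^ k' * risingFactorial (ℓ : k) k') •
          ((aA k) ^ (ℓ + k') * (bA k) ^ (r + 1 - k'))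
        + ((r.choose k' : k) * ((2 : k)⁻¹) ^ k' * risingFactorial (ℓ : k) k' *
            (((ℓ : k) + (k' : k)) * (2 : k)⁻¹)) •
          ((aA k) ^ (ℓ + (k' + 1)) * (bA k) ^ (r + 1 - (k' + 1))) := by
      intro k' hk'
      rw [Finset.mem_range] at hk'
      have e1 : r - k' + 1 = r + 1 - k' := by omega
      have e2 : r - k' = r + 1 - (k' + 1) := by omega
      have e3 : ℓ + k' + 1 = ℓ + (k' + 1) := by omega
      rw [mul_smul_comm, ← mul_assoc, b_apow, add_mul, smul_mul_assoc,
        mul_assoc (aA k ^ (ℓ + k')) (bA k), ← pow_succ', e1, smul_add, smul_smul, e2, e3]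
      congr 2
      push_cast
      ring
    rw [Finset.sum_congr rfl step, Finset.sum_add_distrib]
    have h1 : ∑ k' ∈ Finset.range (r + 1),
        ((r.choose k' : k) * ((2 : k)⁻¹) ^ k' * risingFactorial (ℓ : k) k') •
          ((aA k) ^ (ℓ + k') * (bA k) ^ (r + 1 - k'))
        = ∑ k' ∈ Finset.range (r + 2),
        ((r.choose k' : k) * ((2 : k)⁻¹) ^ k' * risingFactorial (ℓ : k) k') •
          ((aA k) ^ (ℓ + k') * (bA k) ^ (r + 1 - k')) := by
      rw [Finset.sum_range_succ (n := r + 1)]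
      simp [Nat.choose_succ_self]
    rw [h1,
      Finset.sum_range_succ' (fun k' => ((r.choose k' : k) * ((2 : k)⁻¹) ^ k' *
        risingFactorial (ℓ : k) k') • ((aA k) ^ (ℓ + k') * (bA k) ^ (r + 1 - k'))) (r + 1),
      Finset.sum_range_succ' (fun k' => (((r + 1).choose k' : k) * ((2 : k)⁻¹) ^ k' *
        risingFactorial (ℓ : k) k') • ((aA k) ^ (ℓ + k') * (bA k) ^ (r + 1 - k'))) (r + 1),
      add_right_comm, ← Finset.sum_add_distrib]
    have key : ∀ j ∈ Finset.range (r + 1),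
        ((r.choose (j + 1) : k) * ((2 : k)⁻¹) ^ (j + 1) * risingFactorial (ℓ : k) (j + 1)) •
            ((aA k) ^ (ℓ + (j + 1)) * (bA k) ^ (r + 1 - (j + 1)))
        + ((r.choose j : k) * ((2 : k)⁻¹) ^ j * risingFactorial (ℓ : k) j *
            (((ℓ : k) + (j : k)) * (2 : k)⁻¹)) •
            ((aA k) ^ (ℓ + (j + 1)) * (bA k) ^ (r + 1 - (j + 1)))
        = (((r + 1).choose (j + 1) : k) * ((2 : k)⁻¹) ^ (j + 1) *
            risingFactorial (ℓ : k) (j + 1)) •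
            ((aA k) ^ (ℓ + (j + 1)) * (bA k) ^ (r + 1 - (j + 1))) := by
      intro j hj
      rw [← add_smul]
      congr 1
      rw [risingFactorial, Finset.prod_range_succ, ← risingFactorial]
      push_cast [Nat.choose_succ_succ]
      ring
    rw [Finset.sum_congr rfl key]
    simp

theorem bpow_mul_apow (p : ℕ) [Fact p.Prime] (hp : 2 < p) [CharP k p]
    (r ℓ : ℕ) (hr : 1 ≤ r) (hℓ : 1 ≤ ℓ) :
    (bA k) ^ r * (aA k) ^ ℓ =
      ∑ k' ∈ Finset.range (r + 1),
        ((r.choose k' : k) * ((2 : k)⁻¹) ^ k' * risingFactorial (ℓ : k) k') •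
          ((aA k) ^ (ℓ + k') * (bA k) ^ (r - k')) := by
  exact bpow_mul_apow' k r ℓ
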